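/- arXiv:1906.00827 — 2 statements merged into one kernel-verified Lean document; each statement's English description precedes it below -/
import Mathlib

section
/- Flandoli–Gatarek compactness theorem (Hölder version): let X₁ ⊂ X₀ ⊂ X₂ be Banach spaces with the inclusion X₁ ↪ X₀ compact and the inclusion X₀ ↪ X₂ continuous, and let 0 < α ≤ 1 and T > 0. Then every sequence (f_n) of continuous functions f_n : [0,T] → X₁ that is bounded in the sup norm of C([0,T];X₁) and uniformly α-Hölder continuous as maps into X₂ (i.e. sup_n sup_{t ≠ s} ‖f_n(t) − f_n(s)‖_{X₂}/|t−s|^α < ∞) has a subsequence converging uniformly on [0,T] in the norm of X₀. -/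
open Set

/-!
All values `j₁ (f n t)` lie in one compact set `K ⊆ X₀`, since `j₁` is compact and the `f n` are
uniformly bounded. A continuous injection out of a compact space is a uniform embedding, so on `K`
the uniform Hölder bound in `X₂` transfers back to equicontinuity in `X₀`, and the Arzelà–Ascoli
theorem extracts a uniformly convergent subsequence.
-/

theorem Continuous.isUniformInducing_of_injective {α β : Type*} [UniformSpace α] [UniformSpace β]
    [CompactSpace α] [T2Space β] {u : α → β} (hu : Continuous u) (hinj : Function.Injective u) :
    IsUniformInducing u :=
  isUniformInducing_iff_uniformSpace.2 <| unique_uniformity_of_compact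
    (UniformSpace.toTopologicalSpace_comap.trans (hu.isClosedEmbedding hinj).eq_induced.symm) rfl

theorem IsCompact.equicontinuous_of_comp {ι X α β : Type*} [TopologicalSpace X]
    [UniformSpace α] [UniformSpace β] [T2Space β] {K : Set α} (hK : IsCompact K) {u : α → β}
    (hu : ContinuousOn u K) (hinj : InjOn u K) {F : ι → X → α} (hFK : ∀ i x, F i x ∈ K)
    (hF : Equicontinuous ((u ∘ ·) ∘ F)) : Equicontinuous F := by
  have : CompactSpace K := isCompact_iff_compactSpace.mp hK
  let FK : ι → X → K := fun i x => ⟨F i x, hFK i x⟩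
  have hFK : Equicontinuous FK :=
    (hu.domRestrict.isUniformInducing_of_injective hinj.injective).equicontinuous_iff.2 hF
  exact isUniformEmbedding_subtype_val.isUniformInducing.equicontinuous_iff.1 hFK

theorem uniformEquicontinuous_of_dist_le_mul_rpow {ι X Y : Type*} [PseudoMetricSpace X]
    [PseudoMetricSpace Y] {F : ι → X → Y} {C α : ℝ} (hα : 0 < α)
    (hF : ∀ i x y, dist (F i x) (F i y) ≤ C * dist x y ^ α) : UniformEquicontinuous F := by
  refine Metric.uniformEquicontinuous_of_continuity_modulus (fun r => C * r ^ α) ?_ F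
    fun x y i => hF i x y
  have := ((Real.continuousAt_rpow_const 0 α (Or.inr hα.le)).const_mul C).tendsto
  simpa [Real.zero_rpow hα.ne'] using this

/-- The inclusions `X₁ ⊂ X₀ ⊂ X₂` are modelled by the continuous linear maps `j₁` and `j₀`. -/
theorem statement5_general
    {X₁ X₀ X₂ : Type*}
    [NormedAddCommGroup X₁] [NormedSpace ℝ X₁]
    [NormedAddCommGroup X₀] [NormedSpace ℝ X₀]
    [NormedAddCommGroup X₂] [NormedSpace ℝ X₂]
    (j₁ : X₁ →L[ℝ] X₀) (j₀ : X₀ →L[ℝ] X₂)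
    (hj₀ : Function.Injective j₀)
    (hcpt : IsCompactOperator (⇑j₁))
    (α T : ℝ) (hα0 : 0 < α)
    (f : ℕ → ℝ → X₁)
    (hcont : ∀ n, ContinuousOn (f n) (Set.Icc 0 T))
    (M : ℝ)
    (hbdd : ∀ n, ∀ t ∈ Set.Icc (0 : ℝ) T, ‖f n t‖ ≤ M)
    (hHolder : ∀ n, ∀ t ∈ Set.Icc (0 : ℝ) T, ∀ s ∈ Set.Icc (0 : ℝ) T,
      ‖j₀ (j₁ (f n t)) - j₀ (j₁ (f n s))‖ ≤ M * |t - s| ^ α) :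
    ∃ φ : ℕ → ℕ, StrictMono φ ∧ ∃ g : ℝ → X₀,
      TendstoUniformlyOn (fun k t => j₁ (f (φ k) t)) g Filter.atTop (Set.Icc 0 T) := by
  set I := Icc (0 : ℝ) T
  have : CompactSpace I := isCompact_iff_compactSpace.mp isCompact_Icc
  obtain ⟨K, hK, hjK⟩ := hcpt.image_closedBall_subset_compact (f := (j₁ : X₁ →ₗ[ℝ] X₀)) M
  let F : ℕ → BoundedContinuousFunction I X₀ := fun n => .mkOfCompact
    ⟨fun t => j₁ (f n t), (j₁.continuous.comp_continuousOn (hcont n)).domRestrict⟩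
  have hFK : ∀ n t, F n t ∈ K := fun n t =>
    hjK ⟨f n t, mem_closedBall_zero_iff.mpr (hbdd n t t.2), rfl⟩
  have hFequi : Equicontinuous (fun n => ⇑(F n)) :=
    hK.equicontinuous_of_comp j₀.continuous.continuousOn hj₀.injOn hFK <|
      (uniformEquicontinuous_of_dist_le_mul_rpow hα0 fun n s t => by
        rw [Subtype.dist_eq, Real.dist_eq, dist_eq_norm]
        exact hHolder n s s.2 t t.2).equicontinuous
  have hrange : Equicontinuous ((↑) : range F → I → X₀) := by
    simpa [Function.comp_def, apply_rangeSplitting] using hFequi.comp (rangeSplitting F)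
  obtain ⟨G, -, φ, hφ, hFG⟩ := (BoundedContinuousFunction.arzela_ascoli K hK (range F)
    (by rintro _ t ⟨n, rfl⟩; exact hFK n t) hrange).tendsto_subseq
    fun n => subset_closure (mem_range_self n)
  refine ⟨φ, hφ, fun t => if ht : t ∈ I then G ⟨t, ht⟩ else 0, ?_⟩
  rw [tendstoUniformlyOn_iff_tendstoUniformly_comp_coe]
  convert BoundedContinuousFunction.tendsto_iff_tendstoUniformly.mp hFG using 1
  exacts [rfl, funext fun t => dif_pos t.2]

/-- **Flandoli–Gatarek compactness theorem (Hölder version).**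
The Banach spaces `X₁ ⊂ X₀ ⊂ X₂` are modelled by injective continuous linear maps
`j₁ : X₁ → X₀` and `j₀ : X₀ → X₂`, with the embedding `X₁ ↪ X₀` compact. A sequence of
continuous functions `[0,T] → X₁`, bounded in `C([0,T];X₁)` and uniformly `α`-Hölder as
maps into `X₂`, has a subsequence converging uniformly on `[0,T]` in the norm of `X₀`. -/
theorem statement5
    {X₁ X₀ X₂ : Type*}
    [NormedAddCommGroup X₁] [NormedSpace ℝ X₁] [CompleteSpace X₁]
    [NormedAddCommGroup X₀] [NormedSpace ℝ X₀] [CompleteSpace X₀]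
    [NormedAddCommGroup X₂] [NormedSpace ℝ X₂] [CompleteSpace X₂]
    (j₁ : X₁ →L[ℝ] X₀) (j₀ : X₀ →L[ℝ] X₂)
    (hj₁ : Function.Injective j₁) (hj₀ : Function.Injective j₀)
    (hcpt : IsCompactOperator (⇑j₁))
    (α T : ℝ) (hα0 : 0 < α) (hα1 : α ≤ 1) (hT : 0 < T)
    (f : ℕ → ℝ → X₁)
    (hcont : ∀ n, ContinuousOn (f n) (Set.Icc 0 T))
    (M : ℝ)
    (hbdd : ∀ n, ∀ t ∈ Set.Icc (0 : ℝ) T, ‖f n t‖ ≤ M)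
    (hHolder : ∀ n, ∀ t ∈ Set.Icc (0 : ℝ) T, ∀ s ∈ Set.Icc (0 : ℝ) T,
      ‖j₀ (j₁ (f n t)) - j₀ (j₁ (f n s))‖ ≤ M * |t - s| ^ α) :
    ∃ φ : ℕ → ℕ, StrictMono φ ∧ ∃ g : ℝ → X₀,
      TendstoUniformlyOn (fun k t => j₁ (f (φ k) t)) g Filter.atTop (Set.Icc 0 T) :=
  statement5_general j₁ j₀ hj₀ hcpt α T hα0 f hcont M hbdd hHolder
end

section
/- Gyöngy–Krylov convergence criterion: let X be a complete separable metric space and let (Y_n)_{n ≥ 1} be a sequence of X-valued random variables on a probability space (Ω, 𝓕, ℙ). For m, n ≥ 1 let μ_{m,n} denote the joint law of (Y_n, Y_m) on X × X, i.e. μ_{m,n}(E) = ℙ((Y_n, Y_m) ∈ E) for Borel E ⊆ X × X. Then (Y_n) converges in probability (to some X-valued random variable) if and only if for every subsequence (μ_{m_k, n_k})_{k ≥ 1} of the joint laws there exists a further subsequence converging weakly to a probability measure μ on X × X satisfying μ({(u,v) ∈ X × X : u = v}) = 1. -/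
open MeasureTheory ENNReal Filter Topology

/-!
For the forward direction, convergence in probability `Yₙ → Z` passes to the pairs
`(Y_{n_k}, Y_{m_k}) → (Z, Z)`, hence their laws converge weakly to the law of `(Z, Z)`, which is
carried by the diagonal.

For the converse, `{(u, v) | ε ≤ dist u v}` is closed and disjoint from the diagonal, so by the
portmanteau theorem every subsequence of `ℙ(ε ≤ dist Yₙ Yₘ)` has a further subsequence tending
to `0`: the sequence is Cauchy in probability. A subsequence whose consecutive distances exceed
`2⁻ᵏ` with probability at most `2⁻ᵏ` is almost surely Cauchy by Borel–Cantelli, so it converges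
almost surely by completeness, and the Cauchy property transfers its convergence in probability to
the whole sequence.
-/

theorem exists_strictMono_fst_snd_of_tendsto_atTop_prod {ns : ℕ → ℕ × ℕ}
    (h : Tendsto ns atTop (atTop ×ˢ atTop)) :
    ∃ ψ : ℕ → ℕ, StrictMono ψ ∧ StrictMono (fun k => (ns (ψ k)).1) ∧
      StrictMono (fun k => (ns (ψ k)).2) := by
  obtain ⟨h₁, h₂⟩ := tendsto_prod_iff'.1 h
  obtain ⟨ψ₁, hψ₁, hmono₁⟩ := strictMono_subseq_of_tendsto_atTop h₁
  obtain ⟨ψ₂, hψ₂, hmono₂⟩ := strictMono_subseq_of_tendsto_atTop (h₂.comp hψ₁.tendsto_atTop)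
  exact ⟨ψ₁ ∘ ψ₂, hψ₁.comp hψ₂, hmono₁.comp hψ₂, hmono₂⟩

namespace MeasureTheory

variable {α ι E F : Type*} {m : MeasurableSpace α} {μ : Measure α}

section PseudoMetric

variable [PseudoMetricSpace E] [PseudoMetricSpace F]

theorem tendstoInMeasure_iff_lt_dist {f : ι → α → E} {l : Filter ι} {g : α → E} :
    TendstoInMeasure μ f l g ↔
      ∀ ε, 0 < ε → Tendsto (fun i => μ {x | ε < dist (f i x) (g x)}) l (𝓝 0) := by
  rw [tendstoInMeasure_iff_dist]
  refine ⟨fun h ε hε => ?_, fun h ε hε => ?_⟩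
  · exact tendsto_of_tendsto_of_tendsto_of_le_of_le tendsto_const_nhds (h ε hε)
      (fun _ => bot_le) fun _ => measure_mono fun _ (hx : ε < _) => hx.le
  · exact tendsto_of_tendsto_of_tendsto_of_le_of_le tendsto_const_nhds (h (ε / 2) (half_pos hε))
      (fun _ => bot_le) fun _ => measure_mono fun _ (hx : ε ≤ _) => (half_lt_self hε).trans_le hx

theorem TendstoInMeasure.prodMk {l : Filter ι} {f : ι → α → E} {f' : ι → α → F} {g : α → E}
    {g' : α → F} (hf : TendstoInMeasure μ f l g) (hf' : TendstoInMeasure μ f' l g') :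
    TendstoInMeasure μ (fun i x => (f i x, f' i x)) l (fun x => (g x, g' x)) := by
  rw [tendstoInMeasure_iff_dist] at hf hf' ⊢
  intro ε hε
  have hsub : ∀ i, {x | ε ≤ dist (f i x, f' i x) (g x, g' x)} ⊆
      {x | ε ≤ dist (f i x) (g x)} ∪ {x | ε ≤ dist (f' i x) (g' x)} :=
    fun i x (hx : ε ≤ max _ _) => le_max_iff.1 hx
  have hsum := (hf ε hε).add (hf' ε hε)
  rw [add_zero] at hsum
  exact tendsto_of_tendsto_of_tendsto_of_le_of_le tendsto_const_nhds hsum (fun _ => bot_le)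
    fun i => (measure_mono (hsub i)).trans (measure_union_le _ _)

def CauchyInMeasure (μ : Measure α) (f : ℕ → α → E) : Prop :=
  ∀ ε, 0 < ε → Tendsto (fun p : ℕ × ℕ => μ {x | ε ≤ dist (f p.1 x) (f p.2 x)})
    (atTop ×ˢ atTop) (𝓝 0)

variable {f : ℕ → α → E}

theorem CauchyInMeasure.exists_strictMono_measure_le (h : CauchyInMeasure μ f) {b : ℕ → ℝ}
    (hb : ∀ k, 0 < b k) {δ : ℕ → ℝ≥0∞} (hδ : ∀ k, 0 < δ k) :
    ∃ φ : ℕ → ℕ, StrictMono φ ∧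
      ∀ k, μ {x | b k ≤ dist (f (φ k) x) (f (φ (k + 1)) x)} ≤ δ k := by
  have hN : ∀ k, ∃ N, ∀ n m, N ≤ n → N ≤ m → μ {x | b k ≤ dist (f n x) (f m x)} ≤ δ k :=
    fun k => eventually_atTop_prod_self.1 <| by
      simpa only [prod_atTop_atTop_eq] using ((h _ (hb k)).eventually_le_const (hδ k))
  choose N hN using hN
  obtain ⟨φ, hφ, hφN⟩ := extraction_forall_of_eventually fun k => eventually_ge_atTop (N k)
  exact ⟨φ, hφ, fun k => hN k _ _ (hφN k) ((hφN k).trans (hφ k.lt_succ_self).le)⟩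

theorem CauchyInMeasure.tendstoInMeasure_of_subseq (h : CauchyInMeasure μ f) {φ : ℕ → ℕ}
    (hφ : Tendsto φ atTop atTop) {g : α → E} (hg : TendstoInMeasure μ (fun k => f (φ k)) atTop g) :
    TendstoInMeasure μ f atTop g := by
  rw [tendstoInMeasure_iff_dist] at hg ⊢
  intro ε hε
  rw [ENNReal.tendsto_atTop_zero]
  intro δ hδ
  obtain ⟨N, hN⟩ := eventually_atTop_prod_self.1 <| by
    simpa only [prod_atTop_atTop_eq] using
      (h _ (half_pos hε)).eventually_le_const (ENNReal.half_pos hδ.ne')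
  obtain ⟨k, hkg, hkN⟩ := ((hg _ (half_pos hε)).eventually_le_const (ENNReal.half_pos hδ.ne')
    |>.and (hφ.eventually_ge_atTop N)).exists
  refine ⟨N, fun n hn => ?_⟩
  have hsub : {x | ε ≤ dist (f n x) (g x)} ⊆
      {x | ε / 2 ≤ dist (f n x) (f (φ k) x)} ∪ {x | ε / 2 ≤ dist (f (φ k) x) (g x)} := by
    intro x hx
    by_contra! hcon
    simp only [Set.mem_union, Set.mem_ofPred_eq, not_or, not_le] at hx hcon
    linarith [dist_triangle (f n x) (f (φ k) x) (g x)]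
  calc μ {x | ε ≤ dist (f n x) (g x)}
      ≤ μ {x | ε / 2 ≤ dist (f n x) (f (φ k) x)} + μ {x | ε / 2 ≤ dist (f (φ k) x) (g x)} :=
        (measure_mono hsub).trans (measure_union_le _ _)
    _ ≤ δ / 2 + δ / 2 := add_le_add (hN n (φ k) hn hkN) hkg
    _ = δ := ENNReal.add_halves δ

theorem ae_cauchySeq_of_tsum_measure_le_dist_ne_top {u : ℕ → α → E} {b : ℕ → ℝ}
    (hb : Summable b) (h : ∑' k, μ {x | b k ≤ dist (u k x) (u (k + 1) x)} ≠ ∞) :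
    ∀ᵐ x ∂μ, CauchySeq fun k => u k x := by
  filter_upwards [ae_eventually_notMem h] with x hx
  refine cauchySeq_of_summable_dist (hb.of_norm_bounded_eventually ?_)
  rw [Nat.cofinite_eq_atTop]
  filter_upwards [hx] with k hk
  simpa only [Real.norm_eq_abs, abs_dist] using (not_le.1 hk).le

end PseudoMetric

theorem CauchyInMeasure.exists_tendstoInMeasure [MetricSpace E] [CompleteSpace E]
    [SecondCountableTopology E] [MeasurableSpace E] [BorelSpace E] [IsFiniteMeasure μ]
    {f : ℕ → α → E} (hf : ∀ n, Measurable (f n)) (h : CauchyInMeasure μ f) :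
    ∃ g, Measurable g ∧ TendstoInMeasure μ f atTop g := by
  obtain ⟨φ, hφ, hφμ⟩ := h.exists_strictMono_measure_le (b := fun k => 2⁻¹ ^ k)
    (fun k => by positivity) (δ := fun k => 2⁻¹ ^ k)
    fun k => ENNReal.pow_pos (ENNReal.inv_pos.2 ENNReal.ofNat_ne_top) k
  have hsum : ∑' k, μ {x | 2⁻¹ ^ k ≤ dist (f (φ k) x) (f (φ (k + 1)) x)} ≠ ∞ := by
    refine ne_top_of_le_ne_top ?_ (ENNReal.tsum_le_tsum hφμ)
    simp [ENNReal.tsum_geometric, ENNReal.one_sub_inv_two]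
  have hcauchy := ae_cauchySeq_of_tsum_measure_le_dist_ne_top
    (summable_geometric_of_lt_one (by norm_num) (by norm_num)) hsum
  obtain ⟨g, hg, hφg⟩ := measurable_limit_of_tendsto_metrizable_ae
    (fun k => (hf (φ k)).aemeasurable) (hcauchy.mono fun _ hx => cauchySeq_tendsto_of_complete hx)
  exact ⟨g, hg, h.tendstoInMeasure_of_subseq hφ.tendsto_atTop
    (tendstoInMeasure_of_tendsto_ae (fun k => (hf (φ k)).aestronglyMeasurable) hφg)⟩

theorem tendsto_measure_of_tendsto_integral_of_isClosed {Ω : Type*} [MeasurableSpace Ω]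
    [TopologicalSpace Ω] [OpensMeasurableSpace Ω] [HasOuterApproxClosed Ω] {L : Filter ι}
    {ν : ι → Measure Ω} [∀ i, IsProbabilityMeasure (ν i)] {μ : Measure Ω} [IsProbabilityMeasure μ]
    (h : ∀ g : BoundedContinuousFunction Ω ℝ,
      Tendsto (fun i => ∫ x, g x ∂ν i) L (𝓝 (∫ x, g x ∂μ)))
    {F : Set Ω} (hF : IsClosed F) (hμF : μ F = 0) :
    Tendsto (fun i => ν i F) L (𝓝 0) := by
  have hweak : Tendsto (β := ProbabilityMeasure Ω) (fun i => ⟨ν i, inferInstance⟩) L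
      (𝓝 ⟨μ, inferInstance⟩) :=
    ProbabilityMeasure.tendsto_iff_forall_integral_tendsto.2 h
  have hlimsup := ProbabilityMeasure.limsup_measure_closed_le_of_tendsto hweak hF
  exact tendsto_order.2 ⟨fun a ha => absurd ha _root_.not_lt_zero,
    fun a ha => eventually_lt_of_limsup_lt ((hlimsup.trans_eq hμF).trans_lt ha)⟩

section Metric

variable [MetricSpace E] [SecondCountableTopology E] [MeasurableSpace E] [BorelSpace E]
  [IsProbabilityMeasure μ]

theorem TendstoInMeasure.tendsto_integral_map_prodMk {f : ℕ → α → E} {g : α → E}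
    (hf : ∀ n, Measurable (f n)) (hfg : TendstoInMeasure μ f atTop g) {nk mk : ℕ → ℕ}
    (hnk : Tendsto nk atTop atTop) (hmk : Tendsto mk atTop atTop)
    (h : BoundedContinuousFunction (E × E) ℝ) :
    Tendsto (fun k => ∫ q, h q ∂(μ.map fun x => (f (nk k) x, f (mk k) x))) atTop
      (𝓝 (∫ q, h q ∂(μ.map fun x => (g x, g x)))) :=
  ProbabilityMeasure.tendsto_iff_forall_integral_tendsto.1
    (((hfg.comp hnk).prodMk (hfg.comp hmk)).tendstoInDistribution
      fun _ => ((hf _).prodMk (hf _)).aemeasurable).tendsto h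

theorem cauchyInMeasure_of_forall_exists_subseq_tendsto_diagonal {f : ℕ → α → E}
    (hf : ∀ n, Measurable (f n))
    (H : ∀ nk mk : ℕ → ℕ, StrictMono nk → StrictMono mk →
      ∃ φ : ℕ → ℕ, StrictMono φ ∧ ∃ ν : Measure (E × E), IsProbabilityMeasure ν ∧
        (∀ h : BoundedContinuousFunction (E × E) ℝ,
          Tendsto (fun k => ∫ q, h q ∂(μ.map fun x => (f (nk (φ k)) x, f (mk (φ k)) x)))
            atTop (𝓝 (∫ q, h q ∂ν))) ∧
        ν (Set.diagonal E) = 1) :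
    CauchyInMeasure μ f := by
  intro ε hε
  have hF : IsClosed {q : E × E | ε ≤ dist q.1 q.2} := isClosed_le continuous_const continuous_dist
  refine tendsto_of_subseq_tendsto fun ns hns => ?_
  obtain ⟨ψ, -, hfst, hsnd⟩ := exists_strictMono_fst_snd_of_tendsto_atTop_prod hns
  obtain ⟨φ, -, ν, hν, hconv, hdiag⟩ := H _ _ hfst hsnd
  have hpair : ∀ k, Measurable fun x => (f (ns (ψ (φ k))).1 x, f (ns (ψ (φ k))).2 x) :=
    fun k => (hf _).prodMk (hf _)
  have := fun k => Measure.isProbabilityMeasure_map (μ := μ) (hpair k).aemeasurable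
  have hFdiag : {q : E × E | ε ≤ dist q.1 q.2} ⊆ (Set.diagonal E)ᶜ := by
    intro q (hq : ε ≤ dist q.1 q.2) (hq' : q.1 = q.2)
    rw [hq', dist_self] at hq
    exact hε.not_ge hq
  have hνF : ν {q : E × E | ε ≤ dist q.1 q.2} = 0 := measure_mono_null hFdiag
    ((prob_compl_eq_zero_iff isClosed_diagonal.measurableSet).2 hdiag)
  refine ⟨ψ ∘ φ, ?_⟩
  have hlim := tendsto_measure_of_tendsto_integral_of_isClosed hconv hF hνF
  simp only [Measure.map_apply (hpair _) hF.measurableSet] at hlim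
  exact hlim

end Metric

end MeasureTheory

/-- **Gyöngy–Krylov convergence criterion.**
A sequence of random variables with values in a Polish space `X` converges in probability
if and only if every subsequence of the joint laws `μ_{m,n} = law (Yₙ, Yₘ)` has a further
subsequence converging weakly to a probability measure concentrated on the diagonal. -/
theorem statement16 {X : Type*} [MetricSpace X] [CompleteSpace X]
    [TopologicalSpace.SeparableSpace X] [MeasurableSpace X] [BorelSpace X]
    {Ω : Type*} [MeasurableSpace Ω] (P : Measure Ω) [IsProbabilityMeasure P]
    (Y : ℕ → Ω → X) (hY : ∀ n, Measurable (Y n)) :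
    (∃ Z : Ω → X, Measurable Z ∧ ∀ ε : ℝ, 0 < ε →
        Filter.Tendsto (fun n => P {ω | ε < dist (Y n ω) (Z ω)}) Filter.atTop (nhds 0)) ↔
    (∀ nk mk : ℕ → ℕ, StrictMono nk → StrictMono mk →
      ∃ φ : ℕ → ℕ, StrictMono φ ∧ ∃ μ : Measure (X × X),
        IsProbabilityMeasure μ ∧
        (∀ g : BoundedContinuousFunction (X × X) ℝ,
          Filter.Tendsto
            (fun k => ∫ q, g q ∂(P.map (fun ω => (Y (nk (φ k)) ω, Y (mk (φ k)) ω))))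
            Filter.atTop (nhds (∫ q, g q ∂μ))) ∧
        μ {q : X × X | q.1 = q.2} = 1) := by
  constructor
  · rintro ⟨Z, hZ, hYZ⟩ nk mk hnk hmk
    have hZZ : Measurable fun ω => (Z ω, Z ω) := hZ.prodMk hZ
    refine ⟨id, strictMono_id, P.map fun ω => (Z ω, Z ω),
      Measure.isProbabilityMeasure_map hZZ.aemeasurable,
      (tendstoInMeasure_iff_lt_dist.2 hYZ).tendsto_integral_map_prodMk hY hnk.tendsto_atTop
        hmk.tendsto_atTop, ?_⟩
    change P.map _ (Set.diagonal X) = 1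
    rw [Measure.map_apply hZZ isClosed_diagonal.measurableSet]
    exact (congrArg P (Set.eq_univ_of_forall fun _ => rfl)).trans measure_univ
  · intro H
    obtain ⟨Z, hZ, hYZ⟩ :=
      (cauchyInMeasure_of_forall_exists_subseq_tendsto_diagonal hY H).exists_tendstoInMeasure hY
    exact ⟨Z, hZ, tendstoInMeasure_iff_lt_dist.1 hYZ⟩
end
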